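/- Let 0 < s ≤ 1 and let n be a positive integer. If z ∈ ℂ satisfies |z| ≤ 1 + s/√n and r is a real number with 1/2 ≤ r ≤ 1 + s/√n, then |z − r| ≤ 2·|z·r − 1| + 4s/√n. -/

import Mathlib

/-!
Put `t = ‖z r - 1‖`. The identity `t² = ‖z - r‖² + (‖z‖² - 1)(r² - 1)` gives `‖z - r‖ ≤ t`
when `‖z‖` and `r` lie on the same side of `1`. Otherwise the factor above `1` is `O(ε)`, while
the factor below `1` is `O(t + ε)` because `1 - ‖z‖ r ≤ t`; hence `‖z - r‖ ≤ t + 3ε` for `ε ≤ 1`.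
For `ε ≥ 1` the triangle inequality `‖z - r‖ ≤ 2 + 2ε` suffices.
-/

open ComplexConjugate

theorem Complex.sq_norm_mul_conj_sub_one (z w : ℂ) :
    ‖z * conj w - 1‖ ^ 2 = ‖z - w‖ ^ 2 + (‖z‖ ^ 2 - 1) * (‖w‖ ^ 2 - 1) := by
  simp only [← Complex.normSq_eq_norm_sq, Complex.normSq_sub, Complex.normSq_mul,
    Complex.normSq_conj, Complex.mul_re, Complex.conj_re, Complex.conj_im, map_one, mul_one]
  ring

theorem one_sub_sq_mul_sq_sub_one_le {a r t ε : ℝ} (hε : ε ≤ 1) (ha : a ≤ 1)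
    (hr₁ : 1 ≤ r) (hr : r ≤ 1 + ε) (ht : 1 - a * r ≤ t) :
    (1 - a ^ 2) * (r ^ 2 - 1) ≤ 6 * ε * (t + ε) := by
  have h₁ : 1 - a ≤ t + ε := by nlinarith
  have h₂ : 1 - a ^ 2 ≤ 2 * (t + ε) := by nlinarith
  have h₃ : r ^ 2 - 1 ≤ 3 * ε := by nlinarith
  calc (1 - a ^ 2) * (r ^ 2 - 1) ≤ 2 * (t + ε) * (3 * ε) :=
        mul_le_mul h₂ h₃ (by nlinarith) (by linarith)
    _ = 6 * ε * (t + ε) := by ring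

theorem Complex.norm_sub_ofReal_le_norm_mul_ofReal_sub_one_add {z : ℂ} {r ε : ℝ}
    (hε₀ : 0 ≤ ε) (hε₁ : ε ≤ 1) (hz : ‖z‖ ≤ 1 + ε) (hr₀ : 0 ≤ r) (hr : r ≤ 1 + ε) :
    ‖z - r‖ ≤ ‖z * r - 1‖ + 3 * ε := by
  have hsplit := Complex.sq_norm_mul_conj_sub_one z r
  rw [Complex.conj_ofReal, Complex.norm_real, Real.norm_of_nonneg hr₀] at hsplit
  have hlow : 1 - ‖z‖ * r ≤ ‖z * r - 1‖ := by
    simpa [norm_sub_rev, Complex.norm_real, abs_of_nonneg hr₀] using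
      norm_sub_norm_le (1 : ℂ) (z * r)
  have ht := norm_nonneg (z * r - 1)
  have hcross : ‖z - r‖ ^ 2 ≤ ‖z * r - 1‖ ^ 2 + 6 * ε * (‖z * r - 1‖ + ε) := by
    have hpos : 0 ≤ 6 * ε * (‖z * r - 1‖ + ε) := by positivity
    rcases le_total ‖z‖ 1 with ha | ha <;> rcases le_total r 1 with hr₁ | hr₁
    · nlinarith [mul_nonneg (sub_nonneg.2 ha) (sub_nonneg.2 hr₁), norm_nonneg z]
    · nlinarith [one_sub_sq_mul_sq_sub_one_le hε₁ ha hr₁ hr hlow]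
    · nlinarith [one_sub_sq_mul_sq_sub_one_le hε₁ hr₁ ha hz (mul_comm r ‖z‖ ▸ hlow)]
    · nlinarith [mul_nonneg (sub_nonneg.2 ha) (sub_nonneg.2 hr₁), norm_nonneg z]
  refine le_of_pow_le_pow_left₀ two_ne_zero (by positivity) ?_
  nlinarith

theorem Complex.norm_sub_ofReal_le_two_mul_norm_mul_ofReal_sub_one_add {z : ℂ} {r ε : ℝ}
    (hε : 0 ≤ ε) (hz : ‖z‖ ≤ 1 + ε) (hr₀ : 0 ≤ r) (hr : r ≤ 1 + ε) :
    ‖z - r‖ ≤ 2 * ‖z * r - 1‖ + 4 * ε := by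
  have ht := norm_nonneg (z * r - 1)
  rcases le_total ε 1 with hε₁ | hε₁
  · linarith [norm_sub_ofReal_le_norm_mul_ofReal_sub_one_add hε hε₁ hz hr₀ hr]
  · calc ‖z - r‖ ≤ ‖z‖ + ‖(r : ℂ)‖ := norm_sub_le _ _
      _ ≤ 2 * ‖z * r - 1‖ + 4 * ε := by
        rw [Complex.norm_real, Real.norm_of_nonneg hr₀]; linarith

theorem dist_le_two_mul_dist_prod_one
    (s : ℝ) (hs0 : 0 < s) (n : ℕ)
    (z : ℂ) (r : ℝ)
    (hz : ‖z‖ ≤ 1 + s / Real.sqrt n)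
    (hr1 : 1 / 2 ≤ r) (hr2 : r ≤ 1 + s / Real.sqrt n) :
    ‖z - (r : ℂ)‖ ≤
      2 * ‖z * (r : ℂ) - 1‖ + 4 * s / Real.sqrt n := by
  rw [mul_div_assoc]
  exact Complex.norm_sub_ofReal_le_two_mul_norm_mul_ofReal_sub_one_add (by positivity) hz
    (by linarith) hr2
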